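/- arXiv:2110.14453 — 3 statements merged into one kernel-verified Lean document; each statement's English description precedes it below -/
import Mathlib

section
/- Let G be a finite nonempty simple graph. If G is Type 1, i.e., χ_T(G) = Δ(G) + 1, then the direct product G × K_2 is Type 1, i.e., χ_T(G × K_2) = Δ(G × K_2) + 1 = Δ(G) + 1. -/
open SimpleGraph

/-- Tensor (direct / categorical) product of simple graphs:
`(u, v)` is adjacent to `(u', v')` iff `u ~ u'` in `G` and `v ~ v'` in `H`. -/
def tensorProd {V W : Type*} (G : SimpleGraph V) (H : SimpleGraph W) :
    SimpleGraph (V × W) where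
  Adj x y := G.Adj x.1 y.1 ∧ H.Adj x.2 y.2
  symm := ⟨fun _ _ h => ⟨h.1.symm, h.2.symm⟩⟩
  loopless := ⟨fun x h => G.loopless.irrefl x.1 h.1⟩

instance {V W : Type*} (G : SimpleGraph V) (H : SimpleGraph W)
    [DecidableRel G.Adj] [DecidableRel H.Adj] : DecidableRel (tensorProd G H).Adj :=
  fun x y => inferInstanceAs (Decidable (G.Adj x.1 y.1 ∧ H.Adj x.2 y.2))

/-- `G` has a proper total coloring with `k` colors: adjacent vertices get distinct
colors, distinct incident edges get distinct colors, and each edge gets a color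
distinct from those of both of its endpoints. -/
def HasTotalColoring {V : Type*} (G : SimpleGraph V) (k : ℕ) : Prop :=
  ∃ (cv : V → Fin k) (ce : Sym2 V → Fin k),
    (∀ u v, G.Adj u v → cv u ≠ cv v) ∧
    (∀ u v w, G.Adj u v → G.Adj u w → v ≠ w → ce s(u, v) ≠ ce s(u, w)) ∧
    (∀ u v, G.Adj u v → ce s(u, v) ≠ cv u ∧ ce s(u, v) ≠ cv v)

/-- The total chromatic number: the least `k` such that `G` has a `k`-total coloring. -/
noncomputable def totalChromaticNumber {V : Type*} (G : SimpleGraph V) : ℕ :=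
  sInf {k | HasTotalColoring G k}

/-!
The projection `G × K₂ → G` is a graph homomorphism, and it is injective on every neighborhood,
because the `K₂`-coordinate of any neighbor of `(u, i)` is forced to be the other vertex of `K₂`.
Pulling colors back along it therefore turns a `(Δ + 1)`-total coloring of `G` into one of
`G × K₂`, which has the same maximum degree; and no graph has a total coloring with `Δ` colors.
-/

namespace HasTotalColoring

variable {V W : Type*} {G : SimpleGraph V} {H : SimpleGraph W} {k : ℕ}

theorem comap (h : HasTotalColoring G k) (f : H →g G)
    (hf : ∀ u v w, H.Adj u v → H.Adj u w → f v = f w → v = w) : HasTotalColoring H k := by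
  obtain ⟨cv, ce, hv, he, hve⟩ := h
  refine ⟨fun v => cv (f v), fun e => ce (e.map f), fun u v huv => hv _ _ (f.map_adj huv), ?_, ?_⟩
  · intro u v w huv huw hvw
    simpa only [Sym2.map_mk] using
      he _ _ _ (f.map_adj huv) (f.map_adj huw) (mt (hf u v w huv huw) hvw)
  · intro u v huv
    simpa only [Sym2.map_mk] using hve _ _ (f.map_adj huv)

/-- The vertex `u` and its incident edges already need `degree u + 1` distinct colors. -/
theorem degree_lt [Fintype V] [DecidableRel G.Adj] (h : HasTotalColoring G k) (u : V) :
    G.degree u < k := by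
  classical
  obtain ⟨cv, ce, -, he, hve⟩ := h
  set edgeColors := (G.neighborFinset u).image fun v => ce s(u, v)
  have hcard : edgeColors.card = G.degree u :=
    Finset.card_image_of_injOn fun v hv w hw hvw => by
      by_contra hne
      exact he u v w ((G.mem_neighborFinset u v).1 hv) ((G.mem_neighborFinset u w).1 hw) hne hvw
  have hnotMem : cv u ∉ edgeColors := by
    simp only [edgeColors, Finset.mem_image, mem_neighborFinset, not_exists, not_and]
    exact fun v huv => (hve u v huv).1
  calc G.degree u < (insert (cv u) edgeColors).card := by
        rw [Finset.card_insert_of_notMem hnotMem, hcard]; exact Nat.lt_succ_self _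
    _ ≤ k := (Finset.card_le_univ _).trans_eq (Fintype.card_fin k)

theorem maxDegree_lt [Fintype V] [Nonempty V] [DecidableRel G.Adj] (h : HasTotalColoring G k) :
    G.maxDegree < k := by
  obtain ⟨u, hu⟩ := G.exists_maximal_degree_vertex
  exact hu ▸ h.degree_lt u

end HasTotalColoring

theorem totalChromaticNumber_eq_maxDegree_add_one_iff {V : Type*} [Fintype V] [Nonempty V]
    (G : SimpleGraph V) [DecidableRel G.Adj] :
    totalChromaticNumber G = G.maxDegree + 1 ↔ HasTotalColoring G (G.maxDegree + 1) := by
  constructor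
  · intro h
    have hpos : 0 < totalChromaticNumber G := h ▸ Nat.succ_pos _
    exact h ▸ Nat.sInf_mem (Nat.nonempty_of_pos_sInf hpos)
  · intro h
    exact le_antisymm (Nat.sInf_le h) (le_csInf ⟨_, h⟩ fun k hk => hk.maxDegree_lt)

theorem SimpleGraph.IsRegularOfDegree.eq_of_adj_of_adj {W : Type*} {H : SimpleGraph W} [Fintype W]
    [DecidableRel H.Adj] (hH : H.IsRegularOfDegree 1) {u v w : W} (huv : H.Adj u v)
    (huw : H.Adj u w) : v = w :=
  Finset.card_le_one.1 (hH.degree_eq u).le v ((H.mem_neighborFinset u v).2 huv) w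
    ((H.mem_neighborFinset u w).2 huw)

section TensorProduct

variable {V W : Type*} (G : SimpleGraph V) {H : SimpleGraph W}

def tensorProd.fst (H : SimpleGraph W) : tensorProd G H →g G where
  toFun := Prod.fst
  map_rel' := And.left

theorem HasTotalColoring.tensorProd_of_isRegularOfDegree_one {k : ℕ} [Fintype W]
    [DecidableRel H.Adj] (h : HasTotalColoring G k) (hH : H.IsRegularOfDegree 1) :
    HasTotalColoring (tensorProd G H) k :=
  h.comap (tensorProd.fst G H) fun _ _ _ hv hw hvw =>
    Prod.ext hvw (IsRegularOfDegree.eq_of_adj_of_adj hH hv.2 hw.2)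

variable [Fintype V] [Fintype W] [DecidableRel G.Adj] [DecidableRel H.Adj]

theorem tensorProd_neighborFinset (x : V × W) :
    (tensorProd G H).neighborFinset x = G.neighborFinset x.1 ×ˢ H.neighborFinset x.2 := by
  ext y
  simp only [mem_neighborFinset, Finset.mem_product]
  rfl

theorem tensorProd_degree (x : V × W) :
    (tensorProd G H).degree x = G.degree x.1 * H.degree x.2 := by
  rw [← card_neighborFinset_eq_degree, tensorProd_neighborFinset, Finset.card_product]
  rfl

theorem tensorProd_maxDegree_of_isRegularOfDegree_one [Nonempty W] (hH : H.IsRegularOfDegree 1) :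
    (tensorProd G H).maxDegree = G.maxDegree := by
  have hdeg (x : V × W) : (tensorProd G H).degree x = G.degree x.1 := by
    rw [tensorProd_degree, hH.degree_eq, mul_one]
  refine le_antisymm (maxDegree_le_of_forall_degree_le _ _ fun x => ?_)
    (maxDegree_le_of_forall_degree_le _ _ fun u => ?_)
  · exact hdeg x ▸ G.degree_le_maxDegree x.1
  · obtain ⟨i⟩ := ‹Nonempty W›
    exact hdeg (u, i) ▸ (tensorProd G H).degree_le_maxDegree (u, i)

end TensorProduct

theorem isRegularOfDegree_one_top_fin_two : (⊤ : SimpleGraph (Fin 2)).IsRegularOfDegree 1 :=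
  IsRegularOfDegree.top

theorem type1_tensor_K2 {V : Type*} [Fintype V] [Nonempty V]
    (G : SimpleGraph V) [DecidableRel G.Adj]
    (hG : totalChromaticNumber G = G.maxDegree + 1) :
    totalChromaticNumber (tensorProd G (⊤ : SimpleGraph (Fin 2))) =
        (tensorProd G (⊤ : SimpleGraph (Fin 2))).maxDegree + 1 ∧
      (tensorProd G (⊤ : SimpleGraph (Fin 2))).maxDegree = G.maxDegree := by
  have hK2 := isRegularOfDegree_one_top_fin_two
  have hmax := tensorProd_maxDegree_of_isRegularOfDegree_one G hK2
  have hcol := (totalChromaticNumber_eq_maxDegree_add_one_iff G).1 hG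
  refine ⟨?_, hmax⟩
  rw [totalChromaticNumber_eq_maxDegree_add_one_iff, hmax]
  exact hcol.tensorProd_of_isRegularOfDegree_one G hK2
end

section
/- For every integer n ≥ 3, the direct product of cycle graphs C_9 × C_n has total chromatic number 5. -/
open SimpleGraph

/-!
At every vertex of the 4-regular graph `C₉ × Cₙ` the vertex and its four edges need five
distinct colours, so `χ_T ≥ 5`. For five colours, let the colours of a vertex `(i, j)` and of its
two edges into row `i + 1` depend only on `i` and on a state `s j ∈ Fin 5` of the column `j`.
The colouring is proper as soon as the states of any three consecutive columns are compatible,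
which is a finite check along a transition relation on the states. That relation contains a
directed triangle `0 → 1 → 2 → 0` and a 2-cycle `3 ⇄ 4`, joined by `2 → 4` and `3 → 0`, so it
has a closed walk of every length `n ≥ 3`, and such a walk is a valid choice of column states
around `Cₙ`.
-/

theorem HasTotalColoring.degree_lt_s8 {V : Type*} {G : SimpleGraph V} {k : ℕ}
    (h : HasTotalColoring G k) (v : V) [Fintype (G.neighborSet v)] : G.degree v < k := by
  obtain ⟨cv, ce, -, hee, hev⟩ := h
  let star : Option (G.neighborSet v) → Fin k := fun w => w.elim (cv v) fun w => ce s(v, w)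
  have hstar : star.Injective := by
    rintro (_ | ⟨w, hw⟩) (_ | ⟨w', hw'⟩) h
    · rfl
    · exact absurd h.symm (hev v w' hw').1
    · exact absurd h (hev v w hw).1
    · by_contra hne
      exact hee v w w' hw hw' (fun e => hne (by subst e; rfl)) h
  have := Fintype.card_le_of_injective star hstar
  rwa [Fintype.card_option, Fintype.card_fin, card_neighborSet_eq_degree, Nat.succ_le_iff] at this

theorem degree_tensorProd {V W : Type*} {G : SimpleGraph V} {H : SimpleGraph W}
    [Fintype V] [Fintype W] [DecidableRel G.Adj] [DecidableRel H.Adj] (v : V) (w : W) :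
    (tensorProd G H).degree (v, w) = G.degree v * H.degree w := by
  simp only [← card_neighborSet_eq_degree, ← Fintype.card_prod]
  exact Fintype.card_congr ((Equiv.setCongr rfl).trans (Equiv.Set.prod _ _))

theorem cycleGraph_degree {n : ℕ} (hn : 3 ≤ n) (v : Fin n) : (cycleGraph n).degree v = 2 := by
  obtain ⟨m, rfl⟩ := Nat.exists_eq_add_of_le' hn
  exact cycleGraph_degree_three_le

theorem cycleGraph_adj_iff {n : ℕ} [NeZero n] (hn : 2 ≤ n) {u v : Fin n} :
    (cycleGraph n).Adj u v ↔ v = u + 1 ∨ u = v + 1 := by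
  obtain ⟨m, rfl⟩ := Nat.exists_eq_add_of_le' hn
  rw [cycleGraph_adj, sub_eq_iff_eq_add', sub_eq_iff_eq_add', or_comm]

theorem Fin.sub_one_ne_add_one {n : ℕ} [NeZero n] (hn : 3 ≤ n) (x : Fin n) : x - 1 ≠ x + 1 := by
  rw [ne_eq, sub_eq_iff_eq_add, add_assoc, left_eq_add, Fin.ext_iff, Fin.val_add, Fin.val_one',
    Nat.one_mod_eq_one.mpr (by omega), Fin.val_zero, Nat.mod_eq_of_lt (by omega)]
  omega

theorem tensorProd_cycleGraph_adj_iff {r n : ℕ} [NeZero r] [NeZero n] (hr : 2 ≤ r) (hn : 2 ≤ n)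
    {u v : Fin r × Fin n} :
    (tensorProd (cycleGraph r) (cycleGraph n)).Adj u v ↔
      (v.1 = u.1 + 1 ∨ u.1 = v.1 + 1) ∧ (v.2 = u.2 + 1 ∨ u.2 = v.2 + 1) :=
  and_congr (cycleGraph_adj_iff hr) (cycleGraph_adj_iff hn)

def diagNeighbor {r n : ℕ} [NeZero r] [NeZero n] (u : Fin r × Fin n) : Fin 4 → Fin r × Fin n :=
  ![(u.1 + 1, u.2 + 1), (u.1 + 1, u.2 - 1), (u.1 - 1, u.2 - 1), (u.1 - 1, u.2 + 1)]

/-- `vertex i a`, `up i a` and `down i a` colour the vertex `(i, j)` of `C_r × C_n` and its edges to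
`(i + 1, j + 1)` and `(i + 1, j - 1)` when the column `j` is in state `a`. -/
structure ColumnColoring (r k : ℕ) (L : Type*) where
  vertex : Fin r → L → Fin k
  up : Fin r → L → Fin k
  down : Fin r → L → Fin k

namespace ColumnColoring

variable {r n k : ℕ} {L : Type*} [NeZero r] (S : ColumnColoring r k L)

/-- The colours around a vertex in row `i` of a column in state `c` whose left and right
neighbouring columns are in states `p` and `q`: index `0` is the vertex, indices `1`–`4` its edges
in the order of `diagNeighbor`. -/
def starColors (i : Fin r) (p c q : L) : Fin 5 → Fin k :=
  ![S.vertex i c, S.up i c, S.down i c, S.up (i - 1) p, S.down (i - 1) q]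

def IsProperAt (i : Fin r) (p c q : L) : Prop :=
  (S.starColors i p c q).Injective ∧
    S.vertex i c ≠ S.vertex (i + 1) p ∧ S.vertex i c ≠ S.vertex (i + 1) q

instance [DecidableEq L] (i : Fin r) (p c q : L) : Decidable (S.IsProperAt i p c q) :=
  inferInstanceAs (Decidable (_ ∧ _ ∧ _))

variable [NeZero n] (s : Fin n → L)

def vertexColor (u : Fin r × Fin n) : Fin k := S.vertex u.1 (s u.2)

def starColorsAt (u : Fin r × Fin n) : Fin 5 → Fin k :=
  S.starColors u.1 (s (u.2 - 1)) (s u.2) (s (u.2 + 1))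

variable {S s} in
theorem vertexColor_ne_of_fst_eq_add_one {u v : Fin r × Fin n}
    (hs : S.IsProperAt u.1 (s (u.2 - 1)) (s u.2) (s (u.2 + 1)))
    (h₁ : v.1 = u.1 + 1) (h₂ : v.2 = u.2 + 1 ∨ u.2 = v.2 + 1) :
    S.vertexColor s u ≠ S.vertexColor s v := by
  obtain ⟨-, hp, hq⟩ := hs
  rcases h₂ with h₂ | h₂
  · simpa [vertexColor, h₁, h₂] using hq
  · simpa [vertexColor, h₁, eq_sub_of_add_eq h₂.symm] using hp

def upwardEdgeColor (u v : Fin r × Fin n) : Fin k :=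
  if v.2 = u.2 + 1 then S.up u.1 (s u.2) else S.down u.1 (s u.2)

variable [NeZero k]

/-- The value `0` on pairs that are not adjacent is junk. -/
def edgeColorFun (u v : Fin r × Fin n) : Fin k :=
  if v.1 = u.1 + 1 then S.upwardEdgeColor s u v
  else if u.1 = v.1 + 1 then S.upwardEdgeColor s v u else 0

variable {S s} in
theorem edgeColorFun_comm (hr : 3 ≤ r) (u v : Fin r × Fin n) :
    S.edgeColorFun s u v = S.edgeColorFun s v u := by
  have : ¬(v.1 = u.1 + 1 ∧ u.1 = v.1 + 1) := fun ⟨h₁, h₂⟩ =>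
    Fin.sub_one_ne_add_one hr u.1 (h₁ ▸ eq_sub_of_add_eq h₂.symm).symm
  unfold edgeColorFun
  split_ifs <;> tauto

def edgeColor (hr : 3 ≤ r) : Sym2 (Fin r × Fin n) → Fin k :=
  Sym2.lift ⟨S.edgeColorFun s, edgeColorFun_comm hr⟩

theorem exists_edgeColor_eq_starColorsAt (hr : 3 ≤ r) (hn : 3 ≤ n) {u v : Fin r × Fin n}
    (h : (tensorProd (cycleGraph r) (cycleGraph n)).Adj u v) :
    ∃ t : Fin 4, v = diagNeighbor u t ∧ S.edgeColor s hr s(u, v) = S.starColorsAt s u t.succ := by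
  obtain ⟨u₁, u₂⟩ := u
  obtain ⟨v₁, v₂⟩ := v
  rw [tensorProd_cycleGraph_adj_iff (by omega) (by omega)] at h
  obtain ⟨h₁ | h₁, h₂ | h₂⟩ := h <;> dsimp only at h₁ h₂ <;> subst h₁ h₂
  · refine ⟨0, rfl, ?_⟩
    simp [edgeColor, edgeColorFun, upwardEdgeColor, starColorsAt, starColors]
  · refine ⟨1, by simp [diagNeighbor], ?_⟩
    have := Fin.sub_one_ne_add_one hn (v₂ + 1)
    simp_all [edgeColor, edgeColorFun, upwardEdgeColor, starColorsAt, starColors]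
  · refine ⟨3, by simp [diagNeighbor], ?_⟩
    have := Fin.sub_one_ne_add_one hn (u₂ + 1)
    have := Fin.sub_one_ne_add_one hr (v₁ + 1)
    simp_all [edgeColor, edgeColorFun, upwardEdgeColor, starColorsAt, starColors]
  · refine ⟨2, by simp [diagNeighbor], ?_⟩
    have := Fin.sub_one_ne_add_one hr (v₁ + 1)
    simp_all [edgeColor, edgeColorFun, upwardEdgeColor, starColorsAt, starColors]

theorem hasTotalColoring (hr : 3 ≤ r) (hn : 3 ≤ n)
    (hs : ∀ u : Fin r × Fin n, S.IsProperAt u.1 (s (u.2 - 1)) (s u.2) (s (u.2 + 1))) :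
    HasTotalColoring (tensorProd (cycleGraph r) (cycleGraph n)) k := by
  refine ⟨S.vertexColor s, S.edgeColor s hr, fun u v h => ?_, fun u v w hv hw hvw => ?_,
    fun u v h => ⟨?_, ?_⟩⟩
  · obtain ⟨h₁ | h₁, h₂⟩ := (tensorProd_cycleGraph_adj_iff (by omega) (by omega)).1 h
    · exact vertexColor_ne_of_fst_eq_add_one (hs u) h₁ h₂
    · exact (vertexColor_ne_of_fst_eq_add_one (hs v) h₁ h₂.symm).symm
  · obtain ⟨t, rfl, hvt⟩ := S.exists_edgeColor_eq_starColorsAt s hr hn hv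
    obtain ⟨t', rfl, hwt⟩ := S.exists_edgeColor_eq_starColorsAt s hr hn hw
    rw [hvt, hwt]
    exact (hs u).1.ne (Fin.succ_injective _ |>.ne fun htt' => hvw (htt' ▸ rfl))
  · obtain ⟨t, -, ht⟩ := S.exists_edgeColor_eq_starColorsAt s hr hn h
    exact ht ▸ (hs u).1.ne (Fin.succ_ne_zero t)
  · obtain ⟨t, -, ht⟩ := S.exists_edgeColor_eq_starColorsAt s hr hn h.symm
    exact Sym2.eq_swap ▸ ht ▸ (hs v).1.ne (Fin.succ_ne_zero t)

end ColumnColoring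

def c9Coloring : ColumnColoring 9 5 (Fin 5) where
  vertex := ![![0,0,0,0,0], ![4,4,4,4,4], ![3,3,1,3,3], ![0,0,1,0,2], ![4,4,4,4,4], ![3,2,1,3,3],
    ![0,0,1,2,0], ![4,4,4,4,4], ![3,3,1,3,3]]
  up := ![![2,1,1,1,2], ![0,0,0,0,0], ![4,4,4,4,4], ![2,1,3,3,0], ![1,3,2,2,2], ![4,4,4,4,4],
    ![1,3,3,3,3], ![2,3,1,1,2], ![4,4,4,4,4]]
  down := ![![3,3,3,3,3], ![2,1,2,1,2], ![2,1,3,1,2], ![3,2,0,1,3], ![0,1,0,1,0], ![0,3,2,1,0],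
    ![2,1,2,1,2], ![0,0,0,0,0], ![2,1,2,1,2]]

def c9Step (a b : Fin 5) : Prop :=
  (a, b) ∈ ([(0, 1), (1, 2), (2, 0), (2, 4), (4, 3), (3, 4), (3, 0)] : List (Fin 5 × Fin 5))

instance (a b : Fin 5) : Decidable (c9Step a b) := inferInstanceAs (Decidable (_ ∈ _))

theorem c9Coloring_isProperAt :
    ∀ i p c q, c9Step p c → c9Step c q → c9Coloring.IsProperAt i p c q := by
  decide

def c9Walk (n : ℕ) (j : Fin n) : Fin 5 :=
  if n % 2 = 0 then (if j.val % 2 = 0 then 3 else 4)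
  else if j.val = 0 then 0 else if j.val = 1 then 1 else if j.val = 2 then 2
  else if j.val % 2 = 1 then 4 else 3

theorem c9Step_c9Walk {n : ℕ} [NeZero n] (hn : 3 ≤ n) (j : Fin n) :
    c9Step (c9Walk n j) (c9Walk n (j + 1)) := by
  have hj : (j + 1).val = (j.val + 1) % n := by rw [Fin.val_add, Fin.val_one', Nat.add_mod_mod]
  unfold c9Walk
  rw [hj]
  obtain hlt | heq := (show j.val + 1 ≤ n from j.isLt).lt_or_eq
  · rw [Nat.mod_eq_of_lt hlt]
    split_ifs <;> first | decide | omega | contradiction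
  · rw [heq, Nat.mod_self]
    split_ifs <;> first | decide | omega

theorem c9_tensor_cn (n : ℕ) (hn : 3 ≤ n) :
    totalChromaticNumber (tensorProd (cycleGraph 9) (cycleGraph n)) = 5 := by
  have : NeZero n := ⟨by omega⟩
  have h5 : HasTotalColoring (tensorProd (cycleGraph 9) (cycleGraph n)) 5 :=
    c9Coloring.hasTotalColoring (c9Walk n) (by norm_num) hn fun ⟨_, j⟩ =>
      c9Coloring_isProperAt _ _ _ _ (by simpa only [sub_add_cancel] using c9Step_c9Walk hn (j - 1))
        (c9Step_c9Walk hn j)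
  refine le_antisymm (Nat.sInf_le h5) (le_csInf ⟨5, h5⟩ fun k hk => ?_)
  have := hk.degree_lt_s8 (0, 0)
  rwa [degree_tensorProd, cycleGraph_degree (by norm_num), cycleGraph_degree hn] at this
end

section
/- For all positive integers m and n, the direct product of complete bipartite graphs K_{m,m} × K_{n,n} is Type 2, i.e., χ_T(K_{m,m} × K_{n,n}) = mn + 2. -/
/-!
The graph `K_{m,m} × K_{n,n}` is `mn`-regular and bipartite.

For the upper bound, give each vertex `(x, y)` the index `(i, j) ∈ Fin m × Fin n ≃ ZMod (mn)`,
where `i` and `j` are the positions of `x` and `y` within their sides; distinct neighbours of a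
vertex have distinct indices. Colouring the edge `uv` by the sum of the indices of `u` and `v` is
then a proper edge colouring with `mn` colours, and two more colours suffice for the vertices, one
per side.

For the lower bound, the graph contains `K_{r,r}` with `r = mn`, which has no total colouring
with `r + 1` colours: fix a left vertex `u` of colour `c`. Every right vertex `w` meets `r` edges
whose colours avoid its own colour `≠ c`, so one of them has colour `c`. These `r` edges of colour
`c` form a perfect matching, so one of them is incident with `u`, a contradiction.
-/

open SimpleGraph

open Function

variable {V W : Type*} {G : SimpleGraph V}

theorem HasTotalColoring.mono {k k' : ℕ} (h : k ≤ k') (hc : HasTotalColoring G k) :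
    HasTotalColoring G k' := by
  obtain ⟨cv, ce, hv, he, hve⟩ := hc
  refine ⟨Fin.castLE h ∘ cv, Fin.castLE h ∘ ce, ?_, ?_, ?_⟩
  · exact fun u v huv => (Fin.castLE_injective h).ne (hv u v huv)
  · exact fun u v w huv huw hvw => (Fin.castLE_injective h).ne (he u v w huv huw hvw)
  · exact fun u v huv =>
      ⟨(Fin.castLE_injective h).ne (hve u v huv).1, (Fin.castLE_injective h).ne (hve u v huv).2⟩

theorem HasTotalColoring.of_copy {H : SimpleGraph W} {k : ℕ} (f : Copy G H)
    (hc : HasTotalColoring H k) : HasTotalColoring G k := by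
  obtain ⟨cv, ce, hv, he, hve⟩ := hc
  refine ⟨cv ∘ f, ce ∘ Sym2.map f, ?_, ?_, ?_⟩
  · exact fun u v huv => hv _ _ (f.toHom.map_adj huv)
  · exact fun u v w huv huw hvw =>
      he _ _ _ (f.toHom.map_adj huv) (f.toHom.map_adj huw) (f.injective.ne hvw)
  · exact fun u v huv => hve _ _ (f.toHom.map_adj huv)

theorem totalChromaticNumber_eq_succ_iff {k : ℕ} :
    totalChromaticNumber G = k + 1 ↔ HasTotalColoring G (k + 1) ∧ ¬ HasTotalColoring G k :=
  Nat.sInf_upward_closed_eq_succ_iff (fun _ _ h hc => HasTotalColoring.mono h hc) k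

theorem hasTotalColoring_add_two_of_colorable_two {r : ℕ} [NeZero r] (hG : G.Colorable 2)
    (f : V → Fin r) (hf : ∀ v, Set.InjOn f (G.neighborSet v)) : HasTotalColoring G (r + 2) := by
  obtain ⟨C⟩ := hG
  have edge_ne_vertex (a : Fin r) (b : Fin 2) : Fin.castAdd 2 a ≠ Fin.natAdd r b := by
    simp only [ne_eq, Fin.ext_iff, Fin.val_castAdd, Fin.val_natAdd]
    omega
  refine ⟨Fin.natAdd r ∘ C, Sym2.lift ⟨fun u v => Fin.castAdd 2 (f u + f v),
    fun _ _ => congrArg (Fin.castAdd 2) (add_comm _ _)⟩, ?_, ?_, ?_⟩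
  · exact fun u v huv => (Fin.natAdd_injective _ _).ne (C.valid huv)
  · intro u v w huv huw hvw hcol
    exact hvw (hf u huv huw (add_left_cancel (Fin.castAdd_injective r 2 hcol)))
  · exact fun u v _ => ⟨edge_ne_vertex _ _, edge_ne_vertex _ _⟩

theorem not_hasTotalColoring_completeBipartiteGraph {α : Type*} [Fintype α] [Nonempty α] :
    ¬ HasTotalColoring (completeBipartiteGraph α α) (Fintype.card α + 1) := by
  rintro ⟨cv, ce, hv, he, hve⟩
  have adj (p q : α) : (completeBipartiteGraph α α).Adj (.inl p) (.inr q) := by simp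
  obtain ⟨u⟩ := ‹Nonempty α›
  set c := cv (.inl u)
  have edge_of_color_c (q : α) : ∃ p, ce s(.inl p, .inr q) = c := by
    let g : α → {x // x ≠ cv (.inr q)} :=
      fun p => ⟨ce s(.inl p, .inr q), (hve _ _ (adj p q)).2⟩
    have hg : Injective g := fun p p' hpp' => by
      by_contra hne
      refine he (.inr q) (.inl p) (.inl p') (adj p q).symm (adj p' q).symm (by simpa) ?_
      simpa [g, Sym2.eq_swap] using hpp'
    have hcard : Fintype.card α = Fintype.card {x // x ≠ cv (.inr q)} := by
      simp [Fintype.card_subtype_compl]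
    obtain ⟨p, hp⟩ := ((Fintype.bijective_iff_injective_and_card g).2 ⟨hg, hcard⟩).2
      ⟨c, hv _ _ (adj u q)⟩
    exact ⟨p, congrArg Subtype.val hp⟩
  choose φ hφ using edge_of_color_c
  have hφ_inj : Injective φ := fun q q' hqq' => by
    by_contra hne
    refine he (.inl (φ q)) (.inr q) (.inr q') (adj _ q) (hqq' ▸ adj _ q') (by simpa) ?_
    rw [hφ q, hqq', hφ q']
  obtain ⟨q, hq⟩ := Finite.surjective_of_injective hφ_inj u
  subst hq
  exact (hve _ _ (adj _ q)).1 (hφ q)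

section TensorProd

variable {H : SimpleGraph W}

def tensorProdFst : tensorProd G H →g G where
  toFun := Prod.fst
  map_rel' h := h.1

theorem SimpleGraph.Colorable.tensorProd_left {k : ℕ} (hG : G.Colorable k) :
    (tensorProd G H).Colorable k :=
  hG.of_hom tensorProdFst

theorem injOn_neighborSet_tensorProd {α β : Type*} {f : V → α} {g : W → β}
    (hf : ∀ v, Set.InjOn f (G.neighborSet v)) (hg : ∀ w, Set.InjOn g (H.neighborSet w))
    (p : V × W) : Set.InjOn (Prod.map f g) ((tensorProd G H).neighborSet p) :=
  fun _ hx _ hy hxy =>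
    Prod.ext (hf p.1 hx.1 hy.1 (congrArg Prod.fst hxy)) (hg p.2 hx.2 hy.2 (congrArg Prod.snd hxy))

end TensorProd

theorem injOn_neighborSet_completeBipartiteGraph {α : Type*} (v : α ⊕ α) :
    Set.InjOn (Sum.elim id id) ((completeBipartiteGraph α α).neighborSet v) := by
  rintro (x | x) hx (y | y) hy hxy <;> cases v <;> simp_all

def completeBipartiteGraphProdCopy (α β γ δ : Type*) :
    Copy (completeBipartiteGraph (α × γ) (β × δ))
      (tensorProd (completeBipartiteGraph α β) (completeBipartiteGraph γ δ)) where
  toHom :=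
    { toFun := Sum.elim (fun p => (.inl p.1, .inl p.2)) (fun p => (.inr p.1, .inr p.2))
      map_rel' := by rintro (_ | _) (_ | _) <;> simp [tensorProd] }
  injective' := by rintro (_ | _) (_ | _) <;> simp [Prod.ext_iff]

theorem completeBipartite_tensor_type2 (m n : ℕ) (hm : 0 < m) (hn : 0 < n) :
    totalChromaticNumber (tensorProd (completeBipartiteGraph (Fin m) (Fin m))
        (completeBipartiteGraph (Fin n) (Fin n))) = m * n + 2 := by
  have : NeZero (m * n) := ⟨(Nat.mul_pos hm hn).ne'⟩
  have : Nonempty (Fin m × Fin n) := ⟨(⟨0, hm⟩, ⟨0, hn⟩)⟩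
  have hcard : Fintype.card (Fin m × Fin n) = m * n := by simp
  have hbip : (completeBipartiteGraph (Fin m) (Fin m)).Colorable 2 :=
    (CompleteBipartiteGraph.bicoloring _ _).colorable
  refine totalChromaticNumber_eq_succ_iff.2 ⟨?_, fun h => ?_⟩
  · refine hasTotalColoring_add_two_of_colorable_two hbip.tensorProd_left
      (finProdFinEquiv ∘ Prod.map (Sum.elim id id) (Sum.elim id id)) fun p => ?_
    exact finProdFinEquiv.injective.comp_injOn (injOn_neighborSet_tensorProd
      injOn_neighborSet_completeBipartiteGraph injOn_neighborSet_completeBipartiteGraph p)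
  · rw [← hcard] at h
    exact not_hasTotalColoring_completeBipartiteGraph
      (h.of_copy (completeBipartiteGraphProdCopy (Fin m) (Fin m) (Fin n) (Fin n)))
end
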